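/- There exists a positive constant c such that for every natural number d, every finite simple graph of minimum degree at least c·d² has a star-cover in which every star has size at least d. -/

import Mathlib

/-!
Let `C` minimise `(2d + 1)|C| + |U(C)|`, where `U(C)` is the set of vertices neither in `C` nor
adjacent to it. By minimality every vertex is adjacent or equal to at most `2d + 1` vertices of
`U(C)`, and every `Q ⊆ C` has at least `2d|Q|` neighbours in the external neighbourhood `N(C) \ C`.
An undominated vertex therefore has at least `δ - 2d` neighbours in `N(C) \ C`, and double
counting shows that sets of undominated vertices expand by a factor `2d` as soon as
`δ ≥ 4d² + 4d`. Hence `D = C ∪ U(C)` satisfies Hall's condition with multiplicity `d` into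
`N(C) \ C = V \ D`: every vertex of `D` gets `d` private neighbours outside `D`, and every other
vertex of `V \ D` joins the star of one of its neighbours in `C`.
-/

open SimpleGraph

/-- The degree of a vertex `v` in a simple graph `H`. -/
noncomputable def gdeg {V : Type} (H : SimpleGraph V) (v : V) : ℕ :=
  Nat.card (H.neighborSet v)

/-- The degree of a vertex `v` in a subgraph `H` of `G`. -/
noncomputable def subdeg {V : Type} {G : SimpleGraph V} (H : G.Subgraph) (v : V) : ℕ :=
  Nat.card (H.neighborSet v)

/-- A subgraph is a star if it is a tree with at most one vertex of degree greater than 1. -/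
def IsStar {V : Type} {G : SimpleGraph V} (H : G.Subgraph) : Prop :=
  H.coe.IsTree ∧ {v ∈ H.verts | 1 < subdeg H v}.Subsingleton

/-- `G` has a star-cover in which every star has size (number of edges) at least `d`:
a collection of vertex-disjoint stars, each a subgraph of `G`, covering all vertices. -/
def HasStarCover {V : Type} (G : SimpleGraph V) (d : ℕ) : Prop :=
  ∃ (m : ℕ) (S : Fin m → G.Subgraph),
    (∀ i, IsStar (S i)) ∧
    (∀ i, d ≤ (S i).edgeSet.ncard) ∧
    (∀ i j, i ≠ j → Disjoint (S i).verts (S j).verts) ∧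
    (∀ v, ∃ i, v ∈ (S i).verts)

open Finset

lemma Finset.exists_injective_prod_fin_of_forall_mul_card_le {ι α : Type} [DecidableEq α]
    (t : ι → Finset α) (d : ℕ) (h : ∀ s : Finset ι, d * #s ≤ #(s.biUnion t)) :
    ∃ f : ι × Fin d → α, Function.Injective f ∧ ∀ p, f p ∈ t p.1 := by
  classical
  refine (all_card_le_biUnion_card_iff_exists_injective fun p : ι × Fin d ↦ t p.1).mp
    fun s ↦ ?_
  calc #s ≤ #(s.image Prod.fst ×ˢ (univ : Finset (Fin d))) :=
        card_le_card fun p hp ↦ mem_product.mpr ⟨mem_image_of_mem _ hp, mem_univ _⟩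
    _ = d * #(s.image Prod.fst) := by rw [card_product, card_univ, Fintype.card_fin, mul_comm]
    _ ≤ #((s.image Prod.fst).biUnion t) := h _
    _ = #(s.biUnion fun p ↦ t p.1) := by rw [image_biUnion]

namespace SimpleGraph

variable {V : Type} {G : SimpleGraph V}

def starSubgraph (G : SimpleGraph V) (z : V) (L : Set V) (hL : ∀ l ∈ L, G.Adj z l) :
    G.Subgraph where
  verts := insert z L
  Adj a b := (a = z ∧ b ∈ L) ∨ (b = z ∧ a ∈ L)
  adj_sub := by
    rintro a b (⟨rfl, hb⟩ | ⟨rfl, ha⟩)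
    exacts [hL b hb, (hL a ha).symm]
  edge_vert := by
    rintro a b (⟨rfl, -⟩ | ⟨rfl, ha⟩)
    exacts [Set.mem_insert _ _, Set.mem_insert_of_mem _ ha]
  symm := ⟨fun _ _ ↦ Or.symm⟩

section starSubgraph

variable {z : V} {L : Set V} {hL : ∀ l ∈ L, G.Adj z l}

lemma coe_starSubgraph (hz : z ∉ L) :
    (G.starSubgraph z L hL).coe = starGraph ⟨z, Set.mem_insert z L⟩ := by
  ext ⟨a, ha | ha⟩ ⟨b, hb | hb⟩ <;>
    simp only [Subgraph.coe_adj, starSubgraph, starGraph_adj, ne_eq] <;>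
    grind

lemma neighborSet_starSubgraph_of_mem {l : V} (hz : z ∉ L) (hl : l ∈ L) :
    (G.starSubgraph z L hL).neighborSet l = {z} := by
  ext w
  simp only [Subgraph.mem_neighborSet, starSubgraph, Set.mem_singleton_iff]
  grind

lemma isStar_starSubgraph (hz : z ∉ L) : IsStar (G.starSubgraph z L hL) := by
  refine ⟨coe_starSubgraph hz ▸ isTree_starGraph _, ?_⟩
  suffices h : ∀ v ∈ (G.starSubgraph z L hL).verts, 1 < subdeg (G.starSubgraph z L hL) v → v = z
    from fun a ha b hb ↦ (h a ha.1 ha.2).trans (h b hb.1 hb.2).symm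
  rintro v (rfl | hv) hdeg
  · rfl
  · simp [subdeg, neighborSet_starSubgraph_of_mem hz hv] at hdeg

lemma edgeSet_starSubgraph : (G.starSubgraph z L hL).edgeSet = (fun l ↦ s(z, l)) '' L := by
  ext ⟨a, b⟩
  simp only [Subgraph.mem_edgeSet, starSubgraph, Set.mem_image, Sym2.eq_iff]
  grind

lemma ncard_edgeSet_starSubgraph : (G.starSubgraph z L hL).edgeSet.ncard = L.ncard := by
  rw [edgeSet_starSubgraph, Set.ncard_image_of_injective _ fun _ _ ↦ Sym2.congr_right.mp]

end starSubgraph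

lemma hasStarCover_of_fintype {ι : Type} [Fintype ι] {d : ℕ} (S : ι → G.Subgraph)
    (hstar : ∀ i, IsStar (S i)) (hsize : ∀ i, d ≤ (S i).edgeSet.ncard)
    (hdisj : Pairwise fun i j ↦ Disjoint (S i).verts (S j).verts)
    (hcover : ∀ v, ∃ i, v ∈ (S i).verts) : HasStarCover G d := by
  let e := Fintype.equivFin ι
  refine ⟨Fintype.card ι, S ∘ e.symm, fun i ↦ hstar _, fun i ↦ hsize _,
    fun i j hij ↦ hdisj (e.symm.injective.ne hij), fun v ↦ ?_⟩
  obtain ⟨i, hi⟩ := hcover v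
  exact ⟨e i, by simpa using hi⟩

/-- Each fibre of `f` is a star centred at its base point. -/
lemma hasStarCover_of_retraction [Finite V] {d : ℕ} (D : Finset V) (f : V → V)
    (hf_mem : ∀ v, f v ∈ D) (hf_fix : ∀ v ∈ D, f v = v) (hf_adj : ∀ v ∉ D, G.Adj (f v) v)
    (hf_fiber : ∀ z ∈ D, d ≤ {v | f v = z ∧ v ≠ z}.ncard) : HasStarCover G d := by
  have hleaf_adj (z : D) : ∀ l ∈ {v | f v = z ∧ v ≠ z}, G.Adj z l := by
    rintro l ⟨hlz, hl⟩
    exact hlz ▸ hf_adj l fun hlD ↦ hl (hlz ▸ (hf_fix l hlD).symm)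
  have hnot_leaf (z : D) : (z : V) ∉ {v | f v = z ∧ v ≠ z} := fun h ↦ h.2 rfl
  have hverts (z : D) {v : V} (hv : v ∈ (G.starSubgraph z _ (hleaf_adj z)).verts) : f v = z := by
    rcases hv with rfl | ⟨hv, -⟩
    exacts [hf_fix _ z.2, hv]
  refine hasStarCover_of_fintype (fun z : D ↦ G.starSubgraph z _ (hleaf_adj z))
    (fun z ↦ isStar_starSubgraph (hnot_leaf z))
    (fun z ↦ ncard_edgeSet_starSubgraph.symm ▸ hf_fiber z z.2)
    (fun z z' hzz' ↦ Set.disjoint_left.mpr fun v hv hv' ↦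
      hzz' (Subtype.ext ((hverts z hv).symm.trans (hverts z' hv'))))
    (fun v ↦ ⟨⟨f v, hf_mem v⟩, ?_⟩)
  by_cases hv : v = f v
  · exact Or.inl hv
  · exact Set.mem_insert_of_mem _ ⟨rfl, hv⟩

lemma hasStarCover_of_injective [Finite V] {d : ℕ} (D : Finset V)
    (hdom : ∀ v ∉ D, ∃ w ∈ D, G.Adj w v) (φ : D × Fin d → V) (hφ : Function.Injective φ)
    (hφD : ∀ p, φ p ∉ D) (hφadj : ∀ p, G.Adj p.1 (φ p)) : HasStarCover G d := by
  classical
  let g : V → V := fun v ↦ if hv : v ∈ D then v else (hdom v hv).choose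
  have hg_mem (v : V) : g v ∈ D := by
    by_cases hv : v ∈ D
    · simp [g, hv]
    · simpa [g, hv] using (hdom v hv).choose_spec.1
  let f := Function.extend φ (fun p ↦ (p.1 : V)) g
  have hf_φ (p : D × Fin d) : f (φ p) = p.1 := hφ.extend_apply _ _ p
  have hf_g {v : V} (hv : ¬∃ p, φ p = v) : f v = g v := Function.extend_apply' _ _ _ hv
  refine hasStarCover_of_retraction D f (fun v ↦ ?_) (fun v hv ↦ ?_) (fun v hv ↦ ?_)
    (fun z hz ↦ ?_)
  · by_cases h : ∃ p, φ p = v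
    · obtain ⟨p, rfl⟩ := h
      simp [hf_φ]
    · simpa [hf_g h] using hg_mem v
  · rw [hf_g (by rintro ⟨p, rfl⟩; exact hφD p hv)]
    simp [g, hv]
  · by_cases h : ∃ p, φ p = v
    · obtain ⟨p, rfl⟩ := h
      simpa [hf_φ] using hφadj p
    · rw [hf_g h]
      simpa [g, hv] using ((hdom v hv).choose_spec.2)
  · have hrange : Set.range (fun i ↦ φ (⟨z, hz⟩, i)) ⊆ {v | f v = z ∧ v ≠ z} := by
      rintro _ ⟨i, rfl⟩
      exact ⟨hf_φ _, fun h ↦ hφD (⟨z, hz⟩, i) (h ▸ hz :)⟩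
    calc d = (Set.range fun i ↦ φ (⟨z, hz⟩, i)).ncard := by
          rw [Set.ncard_range_of_injective fun i j hij ↦ (Prod.ext_iff.mp (hφ hij)).2,
            Nat.card_eq_fintype_card, Fintype.card_fin]
      _ ≤ _ := Set.ncard_le_ncard hrange

section Domination

variable [Fintype V] [DecidableEq V] (G) [DecidableRel G.Adj]

def undominated (C : Finset V) : Finset V := {v | v ∉ C ∧ ∀ w ∈ C, ¬G.Adj w v}

def externalNeighbors (C : Finset V) : Finset V := {v | v ∉ C ∧ ∃ w ∈ C, G.Adj w v}

def dominationCost (k : ℕ) (C : Finset V) : ℕ := k * #C + #(G.undominated C)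

variable {G}

@[simp] lemma mem_undominated {C : Finset V} {v : V} :
    v ∈ G.undominated C ↔ v ∉ C ∧ ∀ w ∈ C, ¬G.Adj w v := by
  simp [undominated]

@[simp] lemma mem_externalNeighbors {C : Finset V} {v : V} :
    v ∈ G.externalNeighbors C ↔ v ∉ C ∧ ∃ w ∈ C, G.Adj w v := by
  simp [externalNeighbors]

lemma undominated_insert (C : Finset V) (w : V) :
    G.undominated (insert w C) = G.undominated C \ insert w (G.neighborFinset w) := by
  ext v
  simp only [mem_undominated, mem_sdiff, mem_insert, mem_neighborFinset, forall_eq_or_imp]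
  grind [G.symm]

lemma undominated_sdiff_subset (C Q : Finset V) :
    G.undominated (C \ Q) ⊆
      G.undominated C ∪ Q ∪ Q.biUnion fun x ↦ G.neighborFinset x ∩ G.externalNeighbors C := by
  intro v
  simp only [mem_undominated, mem_sdiff, mem_union, mem_biUnion, mem_inter, mem_neighborFinset,
    mem_externalNeighbors]
  grind

section CostMinimizer

variable {k : ℕ} {C : Finset V}

/-- Adding `w` to a cost minimiser cannot pay off. -/
lemma card_undominated_inter_insert_neighborFinset_le
    (hC : ∀ C', G.dominationCost k C ≤ G.dominationCost k C') (w : V) :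
    #(G.undominated C ∩ insert w (G.neighborFinset w)) ≤ k := by
  have hmin := hC (insert w C)
  simp only [dominationCost, undominated_insert] at hmin
  have := card_sdiff_add_card_inter (G.undominated C) (insert w (G.neighborFinset w))
  have := Nat.mul_le_mul_left k (card_insert_le w C)
  rw [mul_add, mul_one] at this
  omega

/-- Removing `Q` from a cost minimiser cannot pay off. -/
lemma mul_card_le_card_add_card_biUnion
    (hC : ∀ C', G.dominationCost k C ≤ G.dominationCost k C')
    {Q : Finset V} (hQ : Q ⊆ C) :
    k * #Q ≤ #Q + #(Q.biUnion fun x ↦ G.neighborFinset x ∩ G.externalNeighbors C) := by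
  have hmin := hC (C \ Q)
  simp only [dominationCost] at hmin
  have := card_le_card (undominated_sdiff_subset (G := G) C Q)
  have := card_union_le (G.undominated C ∪ Q)
    (Q.biUnion fun x ↦ G.neighborFinset x ∩ G.externalNeighbors C)
  have := card_union_le (G.undominated C) Q
  have hsplit := card_sdiff_add_card_eq_card hQ
  have : k * #C = k * #(C \ Q) + k * #Q := by rw [← mul_add, hsplit]
  omega

lemma degree_add_one_le_of_mem_undominated
    (hC : ∀ C', G.dominationCost k C ≤ G.dominationCost k C')
    {u : V} (hu : u ∈ G.undominated C) :
    G.degree u + 1 ≤ #(G.neighborFinset u ∩ G.externalNeighbors C) + k := by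
  have hsub : G.neighborFinset u ⊆ (G.neighborFinset u ∩ G.externalNeighbors C) ∪
      (G.undominated C ∩ insert u (G.neighborFinset u)).erase u := by
    intro v hv
    rw [mem_neighborFinset] at hv
    have hvC : v ∉ C := fun hvC ↦ (mem_undominated.mp hu).2 v hvC hv.symm
    by_cases hdom : ∃ w ∈ C, G.Adj w v
    · exact mem_union_left _ (mem_inter.mpr ⟨(G.mem_neighborFinset u v).mpr hv,
        mem_externalNeighbors.mpr ⟨hvC, hdom⟩⟩)
    · push Not at hdom
      exact mem_union_right _ (mem_erase.mpr ⟨G.ne_of_adj hv |>.symm,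
        mem_inter.mpr ⟨mem_undominated.mpr ⟨hvC, hdom⟩,
          mem_insert_of_mem ((G.mem_neighborFinset u v).mpr hv)⟩⟩)
  have := (card_le_card hsub).trans (card_union_le _ _)
  rw [card_erase_of_mem (mem_inter.mpr ⟨hu, mem_insert_self _ _⟩),
    card_neighborFinset_eq_degree] at this
  have := card_undominated_inter_insert_neighborFinset_le hC u
  have := card_pos.mpr ⟨u, mem_inter.mpr ⟨hu, mem_insert_self u (G.neighborFinset u)⟩⟩
  omega

/-- Double counting the edges between `S` and its external neighbours. -/
lemma card_mul_le_card_biUnion_mul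
    (hC : ∀ C', G.dominationCost k C ≤ G.dominationCost k C') {δ : ℕ}
    (hδ : ∀ v, δ ≤ G.degree v) {S : Finset V} (hS : S ⊆ G.undominated C) :
    #S * (δ + 1 - k) ≤ #(S.biUnion fun u ↦ G.neighborFinset u ∩ G.externalNeighbors C) * k := by
  refine card_mul_le_card_mul G.Adj (fun u hu ↦ ?_) (fun r _ ↦ ?_)
  · have := degree_add_one_le_of_mem_undominated hC (hS hu)
    have hsub : G.neighborFinset u ∩ G.externalNeighbors C ⊆
        (S.biUnion fun u ↦ G.neighborFinset u ∩ G.externalNeighbors C).bipartiteAbove G.Adj u :=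
      fun v hv ↦ mem_filter.mpr ⟨mem_biUnion.mpr ⟨u, hu, hv⟩,
        (G.mem_neighborFinset u v).mp (mem_inter.mp hv).1⟩
    have := card_le_card hsub
    have := hδ u
    omega
  · refine (card_le_card fun u hu ↦ ?_).trans
      (card_undominated_inter_insert_neighborFinset_le hC r)
    obtain ⟨hu, hadj⟩ := mem_filter.mp hu
    exact mem_inter.mpr ⟨hS hu, mem_insert_of_mem ((G.mem_neighborFinset r u).mpr hadj.symm)⟩

end CostMinimizer

lemma mul_card_le_card_biUnion_externalNeighbors {d : ℕ} {C : Finset V}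
    (hC : ∀ C', G.dominationCost (2 * d + 1) C ≤ G.dominationCost (2 * d + 1) C')
    (hδ : ∀ v, 4 * d ^ 2 + 4 * d ≤ G.degree v) {W : Finset V} (hW : W ⊆ C ∪ G.undominated C) :
    d * #W ≤ #(W.biUnion fun x ↦ G.neighborFinset x ∩ G.externalNeighbors C) := by
  set t := fun x ↦ G.neighborFinset x ∩ G.externalNeighbors C
  set Q := W.filter (· ∈ C)
  set S := W.filter (· ∈ G.undominated C)
  have hWQS : #W ≤ #Q + #S := by
    refine (card_le_card fun v hv ↦ ?_).trans (card_union_le Q S)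
    rcases mem_union.mp (hW hv) with h | h
    exacts [mem_union_left _ (mem_filter.mpr ⟨hv, h⟩),
      mem_union_right _ (mem_filter.mpr ⟨hv, h⟩)]
  have hQ : 2 * d * #Q ≤ #(W.biUnion t) := by
    have := mul_card_le_card_add_card_biUnion hC (Q := Q) fun v hv ↦ (mem_filter.mp hv).2
    have := card_le_card (biUnion_subset_biUnion_of_subset_left t (filter_subset (· ∈ C) W))
    nlinarith
  have hS : #S * (2 * d) ≤ #(W.biUnion t) := by
    have h := card_mul_le_card_biUnion_mul hC hδ (S := S) fun v hv ↦ (mem_filter.mp hv).2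
    rw [show 4 * d ^ 2 + 4 * d + 1 - (2 * d + 1) = 2 * d * (2 * d + 1) by
      rw [Nat.sub_eq_of_eq_add]; ring, ← mul_assoc] at h
    have := card_le_card
      (biUnion_subset_biUnion_of_subset_left t (filter_subset (· ∈ G.undominated C) W))
    exact (Nat.le_of_mul_le_mul_right h (by omega)).trans this
  nlinarith

lemma hasStarCover_of_forall_le_degree {d : ℕ} (hδ : ∀ v, 4 * d ^ 2 + 4 * d ≤ G.degree v) :
    HasStarCover G d := by
  obtain ⟨C, hC⟩ := Finite.exists_min (G.dominationCost (2 * d + 1))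
  set D := C ∪ G.undominated C
  have hD {v : V} : v ∉ D ↔ v ∈ G.externalNeighbors C := by
    simp only [D, mem_union, mem_undominated, mem_externalNeighbors]
    grind
  obtain ⟨φ, hφ, hφmem⟩ := exists_injective_prod_fin_of_forall_mul_card_le
    (fun x : D ↦ G.neighborFinset x ∩ G.externalNeighbors C) d fun s ↦ by
      have := mul_card_le_card_biUnion_externalNeighbors hC hδ
        (W := s.image Subtype.val) fun v hv ↦ by
          obtain ⟨x, -, rfl⟩ := mem_image.mp hv
          exact x.2
      rwa [image_biUnion, card_image_of_injective _ Subtype.val_injective] at this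
  refine hasStarCover_of_injective D (fun v hv ↦ ?_) φ hφ
    (fun p ↦ hD.mpr (mem_inter.mp (hφmem p)).2)
    (fun p ↦ (G.mem_neighborFinset _ _).mp (mem_inter.mp (hφmem p)).1)
  obtain ⟨-, w, hw, hwv⟩ := mem_externalNeighbors.mp (hD.mp hv)
  exact ⟨w, mem_union_left _ hw, hwv⟩

end Domination

end SimpleGraph

theorem stmt_3 :
    ∃ c : ℝ, 0 < c ∧ ∀ (d : ℕ) (V : Type) [Fintype V] (G : SimpleGraph V),
      (∀ v, c * (d : ℝ) ^ 2 ≤ (gdeg G v : ℝ)) → HasStarCover G d := by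
  refine ⟨8, by norm_num, fun d V _ G hdeg ↦ ?_⟩
  classical
  refine hasStarCover_of_forall_le_degree fun v ↦ ?_
  have hdeg_nat : 8 * d ^ 2 ≤ G.degree v := by
    rw [← card_neighborSet_eq_degree, ← Nat.card_eq_fintype_card]
    exact_mod_cast hdeg v
  have := Nat.le_self_pow two_ne_zero d
  omega
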